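/- arXiv:1801.05540 — 3 statements merged into one kernel-verified Lean document; each statement's English description precedes it below -/
import Mathlib

section
/- Let α, β ∈ ℝ with α > 0. The functions f(r,t) = α(2t+β)^{1/2}, g(r,t) = α(2t+β)^{1/2}·r, k(r,t) = l(r,t) = (2t+β)^{-1/2} satisfy the system: ∂f/∂t = f·l², ∂g/∂t = g·k·l, ∂k/∂t = k·l² − 2k²l − (g_r/(fg))² + 1/g², ∂l/∂t = −l³ − g_rr/(f²g) + f_r·g_r/(f³g), and ∂k/∂r − (2/g)·g_r·(l−k) = 0, on the region r > 0, 2t+β > 0. -/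
theorem flat_solution_of_so3_system (α β : ℝ) (hα : 0 < α)
    (f g k l : ℝ → ℝ → ℝ)
    (hf : ∀ r t, f r t = α * Real.sqrt (2 * t + β))
    (hg : ∀ r t, g r t = α * Real.sqrt (2 * t + β) * r)
    (hk : ∀ r t, k r t = (Real.sqrt (2 * t + β))⁻¹)
    (hl : ∀ r t, l r t = (Real.sqrt (2 * t + β))⁻¹)
    (r t : ℝ) (hr : 0 < r) (ht : 0 < 2 * t + β) :
    HasDerivAt (fun s => f r s) (f r t * (l r t) ^ 2) t ∧
    HasDerivAt (fun s => g r s) (g r t * k r t * l r t) t ∧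
    HasDerivAt (fun s => k r s)
      (k r t * (l r t) ^ 2 - 2 * (k r t) ^ 2 * l r t
        - (deriv (fun ρ => g ρ t) r / (f r t * g r t)) ^ 2 + 1 / (g r t) ^ 2) t ∧
    HasDerivAt (fun s => l r s)
      (-(l r t) ^ 3 - deriv (deriv (fun ρ => g ρ t)) r / ((f r t) ^ 2 * g r t)
        + deriv (fun ρ => f ρ t) r * deriv (fun ρ => g ρ t) r / ((f r t) ^ 3 * g r t)) t ∧
    deriv (fun ρ => k ρ t) r - (2 / g r t) * deriv (fun ρ => g ρ t) r * (l r t - k r t) = 0 := by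
  set S := Real.sqrt (2 * t + β) with hSdef
  have hS : 0 < S := Real.sqrt_pos.mpr ht
  have hS' : S ≠ 0 := ne_of_gt hS
  have hS2 : S ^ 2 = 2 * t + β := Real.sq_sqrt ht.le
  -- derivative of inner function
  have h1 : HasDerivAt (fun s' : ℝ => 2 * s' + β) 2 t := by
    simpa using ((hasDerivAt_id t).const_mul 2).add_const β
  have hsq : HasDerivAt (fun s' : ℝ => Real.sqrt (2 * s' + β)) (1 / (2 * S) * 2) t := by
    exact (Real.hasDerivAt_sqrt (ne_of_gt ht)).comp t h1
  have hsq' : HasDerivAt (fun s' : ℝ => Real.sqrt (2 * s' + β)) S⁻¹ t := by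
    convert hsq using 1; field_simp
  have hinv : HasDerivAt (fun s' : ℝ => (Real.sqrt (2 * s' + β))⁻¹) (-(S⁻¹) / S ^ 2) t :=
    hsq'.inv hS'
  -- spatial derivatives
  have hgfun : (fun ρ => g ρ t) = fun ρ => α * S * ρ := funext fun ρ => hg ρ t
  have hffun : (fun ρ => f ρ t) = fun _ => α * S := funext fun ρ => hf ρ t
  have hkfun : (fun ρ => k ρ t) = fun _ => S⁻¹ := funext fun ρ => hk ρ t
  have hgr : deriv (fun ρ => g ρ t) r = α * S := by
    rw [hgfun]
    simpa using (((hasDerivAt_id r).const_mul (α * S)).deriv)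
  have hgrr : deriv (deriv (fun ρ => g ρ t)) r = 0 := by
    rw [hgfun]
    have h2 : deriv (fun ρ : ℝ => α * S * ρ) = fun _ : ℝ => α * S := by
      funext x
      simpa using (((hasDerivAt_id x).const_mul (α * S)).deriv)
    rw [h2]
    exact deriv_const _ _
  have hfr : deriv (fun ρ => f ρ t) r = 0 := by rw [hffun]; exact deriv_const _ _
  have hkr : deriv (fun ρ => k ρ t) r = 0 := by rw [hkfun]; exact deriv_const _ _
  have hα' : α ≠ 0 := ne_of_gt hα
  have hr' : r ≠ 0 := ne_of_gt hr
  refine ⟨?_, ?_, ?_, ?_, ?_⟩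
  · have : HasDerivAt (fun s => f r s) (α * S⁻¹) t := by
      have := hsq'.const_mul α
      simpa [hf] using this
    convert this using 1
    rw [hf, hl, ← hSdef]; field_simp
  · have : HasDerivAt (fun s => g r s) (α * S⁻¹ * r) t := by
      have := (hsq'.const_mul α).mul_const r
      simpa [hg] using this
    convert this using 1
    rw [hg, hk, hl, ← hSdef]; field_simp
  · have hd : HasDerivAt (fun s => k r s) (-(S⁻¹) / S ^ 2) t := by
      simpa [hk] using hinv
    convert hd using 1
    rw [hk, hl, hgr, hf, hg, ← hSdef]
    field_simp
    ring
  · have hd : HasDerivAt (fun s => l r s) (-(S⁻¹) / S ^ 2) t := by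
      simpa [hl] using hinv
    convert hd using 1
    rw [hl, hgrr, hfr, hgr, ← hSdef]
    field_simp
    ring
  · rw [hkr, hk, hl]
    simp
end

section
/- For the SO(3)-reduced ODE system dA/dt = S̃A, dS/dt = −tr(S̃)·S + 2 det(S)·I − C² − C̃ + (1/4)(tr C)²·I with C = −det(A)·A·Aᵀ and B = C − (1/2)tr(C)·I: if [S,B] = 0 at some time t₀, then [S,B] = 0 for all t (the commutation constraint is preserved by the flow), assuming A(t) is invertible and S(t) is positive definite for all t. -/
/-!
Since `B - C` is a multiple of the identity, `[S, B] = [S, C]`. Writing `P = S̃`, which is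
symmetric because `S` is, Jacobi's formula gives `(det A)' = tr P · det A`, hence
`C' = tr P · C + P C + C P`; and `S' + tr P · S` commutes with `C`. Therefore `W = [S, C]`
solves the linear equation `W' = P W + W P`, whose only solution vanishing at `t₀` is zero.
-/

open Matrix Set

-- Any norm inducing the product topology would do; this is the entrywise sup norm.
attribute [local instance] Matrix.normedAddCommGroup Matrix.normedSpace

theorem Matrix.det_updateRow_eq_sum {n R : Type*} [Fintype n] [DecidableEq n] [CommRing R]
    (M : Matrix n n R) (i : n) (v : n → R) :
    (M.updateRow i v).det = ∑ k, v k * M.adjugate k i := by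
  rw [← det_transpose, ← updateCol_transpose, ← cramer_apply, cramer_eq_adjugate_mulVec,
    ← adjugate_transpose, mulVec, dotProduct]
  simp only [transpose_apply, mul_comm]

section MatrixCalculus

variable {𝕜 : Type*} [NontriviallyNormedField 𝕜] {l m n : Type*} [Fintype m] [Fintype n] {t : 𝕜}

omit [Fintype m] in
theorem hasDerivAt_matrix_iff {f : 𝕜 → Matrix m n 𝕜} {f' : Matrix m n 𝕜} :
    HasDerivAt f f' t ↔ ∀ i j, HasDerivAt (fun s => f s i j) (f' i j) t :=
  ⟨fun h i j => hasDerivAt_pi.1 (hasDerivAt_pi.1 h i) j,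
    fun h => hasDerivAt_pi.2 fun i => hasDerivAt_pi.2 (h i)⟩

theorem HasDerivAt.matrix_mul {f : 𝕜 → Matrix l m 𝕜} {g : 𝕜 → Matrix m n 𝕜}
    {f' : Matrix l m 𝕜} {g' : Matrix m n 𝕜} (hf : HasDerivAt f f' t) (hg : HasDerivAt g g' t) :
    HasDerivAt (fun s => f s * g s) (f' * g t + f t * g') t := by
  rw [hasDerivAt_matrix_iff] at hf hg ⊢
  intro i j
  simpa only [mul_apply, Matrix.add_apply, ← Finset.sum_add_distrib] using
    HasDerivAt.fun_sum (u := Finset.univ) fun k _ => (hf i k).fun_mul (hg k j)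

theorem HasDerivAt.matrix_transpose {f : 𝕜 → Matrix m n 𝕜} {f' : Matrix m n 𝕜}
    (hf : HasDerivAt f f' t) : HasDerivAt (fun s => (f s)ᵀ) f'ᵀ t :=
  hasDerivAt_matrix_iff.2 fun i j => hasDerivAt_matrix_iff.1 hf j i

theorem HasDerivAt.matrix_det [DecidableEq n] {f : 𝕜 → Matrix n n 𝕜} {f' : Matrix n n 𝕜}
    (hf : HasDerivAt f f' t) :
    HasDerivAt (fun s => (f s).det) ((f t).adjugate * f').trace t := by
  let det : ContinuousMultilinearMap 𝕜 (fun _ : n => n → 𝕜) 𝕜 :=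
    ⟨detRowAlternating.toMultilinearMap, continuous_id.matrix_det⟩
  refine (det.hasFDerivAt (f t) |>.comp_hasDerivAt t hf).congr_deriv ?_
  calc det.linearDeriv (f t) f'
      = ∑ i, ((f t).updateRow i (f' i)).det := ContinuousMultilinearMap.linearDeriv_apply _ _ _
    _ = ((f t).adjugate * f').trace := by
      simp only [det_updateRow_eq_sum, trace, diag_apply, mul_apply]
      rw [Finset.sum_comm]
      simp only [mul_comm]

theorem HasDerivAt.matrix_det_of_eq_mul [DecidableEq n] {A : 𝕜 → Matrix n n 𝕜}
    {P : Matrix n n 𝕜} (hA : HasDerivAt A (P * A t) t) :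
    HasDerivAt (fun s => (A s).det) ((A t).det * P.trace) t := by
  refine hA.matrix_det.congr_deriv ?_
  rw [trace_mul_comm, Matrix.mul_assoc, mul_adjugate, mul_smul_comm, Matrix.mul_one, trace_smul,
    smul_eq_mul]

theorem HasDerivAt.det_smul_mul_transpose [DecidableEq n] {A : 𝕜 → Matrix n n 𝕜}
    {P : Matrix n n 𝕜} (hA : HasDerivAt A (P * A t) t) :
    HasDerivAt (fun s => (A s).det • (A s * (A s)ᵀ))
      (P.trace • ((A t).det • (A t * (A t)ᵀ)) + P * ((A t).det • (A t * (A t)ᵀ))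
        + ((A t).det • (A t * (A t)ᵀ)) * Pᵀ) t := by
  refine (hA.matrix_det_of_eq_mul.smul (hA.matrix_mul hA.matrix_transpose)).congr_deriv ?_
  rw [transpose_mul]
  simp only [Matrix.mul_assoc, smul_add, mul_smul_comm, smul_mul_assoc, smul_smul]
  module

end MatrixCalculus

theorem eq_zero_of_hasDerivAt_clm_apply {E : Type*} [NormedAddCommGroup E] [NormedSpace ℝ E]
    {L : ℝ → E →L[ℝ] E} (hL : Continuous L) {W : ℝ → E}
    (hW : ∀ t, HasDerivAt W (L t (W t)) t) {t₀ : ℝ} (h₀ : W t₀ = 0) (t : ℝ) : W t = 0 := by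
  obtain ⟨a, b, ht, ht₀⟩ : ∃ a b, t ∈ Ioo a b ∧ t₀ ∈ Ioo a b :=
    ⟨min t t₀ - 1, max t t₀ + 1, ⟨by linarith [min_le_left t t₀], by linarith [le_max_left t t₀]⟩,
      ⟨by linarith [min_le_right t t₀], by linarith [le_max_right t t₀]⟩⟩
  obtain ⟨K, hK⟩ := isCompact_Icc.exists_bound_of_continuousOn (hL.continuousOn (s := Icc a b))
  have hLip : ∀ s ∈ Ioo a b, LipschitzOnWith K.toNNReal (L s) univ := fun s hs =>
    ((L s).lipschitz.weaken (by simpa [← NNReal.coe_le_coe] using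
      (hK s (Ioo_subset_Icc_self hs)).trans (le_max_left K 0))).lipschitzOnWith
  have hzero : ∀ s, HasDerivAt (fun _ => (0 : E)) (L s 0) s := fun s =>
    (hasDerivAt_const s 0).congr_deriv (map_zero (L s)).symm
  exact ODE_solution_unique_of_mem_Ioo hLip ht₀ (fun s _ => ⟨hW s, mem_univ _⟩)
    (fun s _ => ⟨hzero s, mem_univ _⟩) h₀ ht

theorem eq_zero_of_hasDerivAt_mul_add_mul {m n : Type*} [Fintype m] [Fintype n]
    {P : ℝ → Matrix m m ℝ} {Q : ℝ → Matrix n n ℝ} (hP : Continuous P) (hQ : Continuous Q)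
    {W : ℝ → Matrix m n ℝ} (hW : ∀ t, HasDerivAt W (P t * W t + W t * Q t) t) {t₀ : ℝ}
    (h₀ : W t₀ = 0) (t : ℝ) : W t = 0 :=
  eq_zero_of_hasDerivAt_clm_apply
    (L := fun t =>
      (mulLeftLinearMap n ℝ (P t) + mulRightLinearMap m ℝ (Q t)).toContinuousLinearMap)
    (continuous_clm_apply.2 fun _ =>
      (hP.matrix_mul continuous_const).add (continuous_const.matrix_mul hQ)) hW h₀ t

theorem Matrix.commute_adjugate {n R : Type*} [Fintype n] [DecidableEq n] [CommRing R]
    (M : Matrix n n R) : Commute M M.adjugate := by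
  rw [Commute, SemiconjBy, mul_adjugate, adjugate_mul]

theorem Commute.sub_smul_one_right_iff {R 𝔸 : Type*} [CommRing R] [Ring 𝔸] [Algebra R 𝔸]
    {a b : 𝔸} {k : R} : Commute a (b - k • 1) ↔ Commute a b :=
  ⟨fun h => by simpa only [sub_add_cancel] using h.add_right ((Commute.one_right a).smul_right k),
    fun h => h.sub_right ((Commute.one_right a).smul_right k)⟩

theorem commutator_deriv_eq_of_commute {R 𝔸 : Type*} [CommRing R] [Ring 𝔸] [Algebra R 𝔸]
    {s p c d ds : 𝔸} {τ : R} (hsp : Commute s p) (hcd : Commute c d) (hds : ds = -τ • s + d) :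
    (ds * c + s * (τ • c + p * c + c * p)) - ((τ • c + p * c + c * p) * s + c * ds)
      = p * (s * c - c * s) + (s * c - c * s) * p := by
  have h : (ds * c + s * (τ • c + p * c + c * p)) - ((τ • c + p * c + c * p) * s + c * ds)
      = p * (s * c - c * s) + (s * c - c * s) * p
        + ((s * p - p * s) * c + c * (s * p - p * s)) - (c * d - d * c) := by
    simp only [hds, add_mul, mul_add, sub_mul, mul_sub, smul_mul_assoc, mul_smul_comm, mul_assoc,
      neg_smul, neg_mul, mul_neg]
    abel
  rw [h, hcd.eq, hsp.eq]
  simp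

theorem commutation_constraint_preserved_general
    (A S C B : ℝ → Matrix (Fin 3) (Fin 3) ℝ) (t₀ : ℝ)
    (hC : ∀ t, C t = -((A t).det • (A t * (A t)ᵀ)))
    (hB : ∀ t, B t = C t - ((1 / 2 : ℝ) * (C t).trace) • (1 : Matrix (Fin 3) (Fin 3) ℝ))
    (hSpos : ∀ t, (S t).PosDef)
    (hAflow : ∀ t, ∀ i j, HasDerivAt (fun s => A s i j) (((S t).adjugate * A t) i j) t)
    (hSflow : ∀ t, ∀ i j, HasDerivAt (fun s => S s i j)
      ((-(((S t).adjugate).trace) • S t + (2 * (S t).det) • (1 : Matrix (Fin 3) (Fin 3) ℝ)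
        - C t * C t - (C t).adjugate
        + ((1 / 4 : ℝ) * (C t).trace ^ 2) • (1 : Matrix (Fin 3) (Fin 3) ℝ)) i j) t)
    (h0 : S t₀ * B t₀ = B t₀ * S t₀) :
    ∀ t, S t * B t = B t * S t := by
  have hS t := hasDerivAt_matrix_iff.2 (hSflow t)
  have hC' t : HasDerivAt C ((S t).adjugate.trace • C t + (S t).adjugate * C t
      + C t * (S t).adjugate) t := by
    have h := (hasDerivAt_matrix_iff.2 (hAflow t)).det_smul_mul_transpose.fun_neg
    rw [← funext hC, (isHermitian_iff_isSymm.1 (hSpos t).isHermitian).adjugate.eq] at h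
    refine h.congr_deriv ?_
    rw [hC]
    simp only [neg_add, smul_neg, mul_neg, neg_mul]
  have hW t : HasDerivAt (fun s => S s * C s - C s * S s)
      ((S t).adjugate * (S t * C t - C t * S t) + (S t * C t - C t * S t) * (S t).adjugate) t := by
    refine (((hS t).matrix_mul (hC' t)).sub ((hC' t).matrix_mul (hS t))).congr_deriv ?_
    have hc : Commute (C t) ((2 * (S t).det) • 1 - C t * C t - (C t).adjugate
        + (1 / 4 * (C t).trace ^ 2) • 1) :=
      ((((Commute.one_right _).smul_right _).sub_right ((Commute.refl _).mul_right
        (Commute.refl _))).sub_right (C t).commute_adjugate).add_right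
        ((Commute.one_right _).smul_right _)
    exact commutator_deriv_eq_of_commute (S t).commute_adjugate hc (by abel)
  have hSadj : Continuous fun t => (S t).adjugate :=
    (continuous_iff_continuousAt.2 fun t => (hS t).continuousAt).matrix_adjugate
  have hW₀ : S t₀ * C t₀ - C t₀ * S t₀ = 0 :=
    sub_eq_zero.2 (Commute.sub_smul_one_right_iff.1 (hB t₀ ▸ h0 : Commute (S t₀) (C t₀ - _)))
  intro t
  rw [hB]
  exact Commute.sub_smul_one_right_iff.2
    (sub_eq_zero.1 (eq_zero_of_hasDerivAt_mul_add_mul hSadj hSadj hW hW₀ t))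

theorem commutation_constraint_preserved
    (A S C B : ℝ → Matrix (Fin 3) (Fin 3) ℝ) (t₀ : ℝ)
    (hC : ∀ t, C t = -((A t).det • (A t * (A t)ᵀ)))
    (hB : ∀ t, B t = C t - ((1 / 2 : ℝ) * (C t).trace) • (1 : Matrix (Fin 3) (Fin 3) ℝ))
    (hAinv : ∀ t, IsUnit (A t).det)
    (hSpos : ∀ t, (S t).PosDef)
    (hAflow : ∀ t, ∀ i j, HasDerivAt (fun s => A s i j) (((S t).adjugate * A t) i j) t)
    (hSflow : ∀ t, ∀ i j, HasDerivAt (fun s => S s i j)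
      ((-(((S t).adjugate).trace) • S t + (2 * (S t).det) • (1 : Matrix (Fin 3) (Fin 3) ℝ)
        - C t * C t - (C t).adjugate
        + ((1 / 4 : ℝ) * (C t).trace ^ 2) • (1 : Matrix (Fin 3) (Fin 3) ℝ)) i j) t)
    (h0 : S t₀ * B t₀ = B t₀ * S t₀) :
    ∀ t, S t * B t = B t * S t :=
  commutation_constraint_preserved_general A S C B t₀ hC hB hSpos hAflow hSflow h0
end

section
/- Let e¹,e²,e³ and a¹,a²,a³ be six linearly independent covectors at a point of a 6-dimensional real vector space, and S a 3×3 positive-definite symmetric real matrix with adjugate S̃. Then the forms ω = (det S)^{-1/2} Σ_{i,j} S̃_{ij} a^i∧e^j and its square satisfy (1/2)ω∧ω = −Σ_{i,j} S_{ij} â^i∧ê^j, where â^i = (1/2)Σ ε_{ijk}a^j∧a^k and ê^i = (1/2)Σ ε_{ijk}e^j∧e^k. -/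
/-- The Levi-Civita symbol on `{1,2,3}` (indexed by `Fin 3`). -/
noncomputable def eps (i j k : Fin 3) : ℝ :=
  ((j.1 : ℝ) - (i.1 : ℝ)) * ((k.1 : ℝ) - (j.1 : ℝ)) * ((k.1 : ℝ) - (i.1 : ℝ)) / 2

/-- Wedge `α ∧ β ∧ γ ∧ δ` of four covectors, evaluated on four vectors. -/
noncomputable def w4 {V : Type*} (α β γ δ : V → ℝ) (v1 v2 v3 v4 : V) : ℝ :=
  Matrix.det !![α v1, α v2, α v3, α v4; β v1, β v2, β v3, β v4;
                γ v1, γ v2, γ v3, γ v4; δ v1, δ v2, δ v3, δ v4]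

/-- Wedge of two 2-forms, evaluated on four vectors, with the `1/(2!2!)` shuffle
normalization. -/
noncomputable def w22 {V : Type*} (A B : V → V → ℝ) (v1 v2 v3 v4 : V) : ℝ :=
  (4 : ℝ)⁻¹ * ∑ σ : Equiv.Perm (Fin 4), ((Equiv.Perm.sign σ : ℤ) : ℝ) *
    A (![v1, v2, v3, v4] (σ 0)) (![v1, v2, v3, v4] (σ 1)) *
    B (![v1, v2, v3, v4] (σ 2)) (![v1, v2, v3, v4] (σ 3))

/-!
For antisymmetric `ω`, `½ ω ∧ ω` evaluated on `v₁, …, v₄` is the Pfaffian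
`ω₁₂ ω₃₄ - ω₁₃ ω₂₄ + ω₁₄ ω₂₃`. For `ω = Σ Tᵢⱼ aⁱ ∧ eʲ` the terms quadratic in `T` pair up into
2 × 2 minors of `T`, so the Pfaffian is `-Σ (adj T)ⱼᵢ a^{i+1} ∧ a^{i+2} ∧ e^{j+1} ∧ e^{j+2}`
(indices mod 3), and contracting the two Levi-Civita symbols turns `âⁱ ∧ êʲ` into exactly
these 4-forms. For `T = S̃ = adj S` one has `adj (adj S) = det S • S`; the prefactor
`(det S)^{-1/2}`, squared, cancels `det S`, and the symmetry of `S` absorbs the transpose.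
-/

theorem Equiv.Perm.sum_sign_mul_fin_four {R : Type*} [CommRing R]
    (f : Fin 4 → Fin 4 → Fin 4 → Fin 4 → R) :
    ∑ σ : Perm (Fin 4), (sign σ : R) * f (σ 0) (σ 1) (σ 2) (σ 3) =
      (f 0 1 2 3 - f 0 1 3 2 - f 0 2 1 3 + f 0 2 3 1 + f 0 3 1 2 - f 0 3 2 1)
      - (f 1 0 2 3 - f 1 0 3 2 - f 1 2 0 3 + f 1 2 3 0 + f 1 3 0 2 - f 1 3 2 0)
      + (f 2 0 1 3 - f 2 0 3 1 - f 2 1 0 3 + f 2 1 3 0 + f 2 3 0 1 - f 2 3 1 0)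
      - (f 3 0 1 2 - f 3 0 2 1 - f 3 1 0 2 + f 3 1 2 0 + f 3 2 0 1 - f 3 2 1 0) := by
  -- writing the indices as iterated `Fin.succ` lets `decomposeFin_symm_apply_succ` fire
  change ∑ σ : Perm (Fin 4), (sign σ : R) *
    f (σ 0) (σ (Fin.succ 0)) (σ (Fin.succ (Fin.succ 0))) (σ (Fin.succ (Fin.succ (Fin.succ 0)))) = _
  simp only [Finset.univ_perm_fin_succ, ← Finset.univ_product_univ, Finset.sum_map,
    Finset.sum_product, toEmbedding_apply, Fin.sum_univ_succ, Fin.sum_univ_zero,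
    decomposeFin_symm_apply_zero, decomposeFin_symm_apply_succ, decomposeFin.symm_sign]
  simp +decide [swap_apply_def]
  ring

theorem Matrix.det_fin_four {R : Type*} [CommRing R] (M : Matrix (Fin 4) (Fin 4) R) :
    M.det =
      M 0 0 * M 1 1 * M 2 2 * M 3 3 - M 0 0 * M 1 1 * M 3 2 * M 2 3
      - M 0 0 * M 2 1 * M 1 2 * M 3 3 + M 0 0 * M 2 1 * M 3 2 * M 1 3
      + M 0 0 * M 3 1 * M 1 2 * M 2 3 - M 0 0 * M 3 1 * M 2 2 * M 1 3
      - M 1 0 * M 0 1 * M 2 2 * M 3 3 + M 1 0 * M 0 1 * M 3 2 * M 2 3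
      + M 1 0 * M 2 1 * M 0 2 * M 3 3 - M 1 0 * M 2 1 * M 3 2 * M 0 3
      - M 1 0 * M 3 1 * M 0 2 * M 2 3 + M 1 0 * M 3 1 * M 2 2 * M 0 3
      + M 2 0 * M 0 1 * M 1 2 * M 3 3 - M 2 0 * M 0 1 * M 3 2 * M 1 3
      - M 2 0 * M 1 1 * M 0 2 * M 3 3 + M 2 0 * M 1 1 * M 3 2 * M 0 3
      + M 2 0 * M 3 1 * M 0 2 * M 1 3 - M 2 0 * M 3 1 * M 1 2 * M 0 3
      - M 3 0 * M 0 1 * M 1 2 * M 2 3 + M 3 0 * M 0 1 * M 2 2 * M 1 3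
      + M 3 0 * M 1 1 * M 0 2 * M 2 3 - M 3 0 * M 1 1 * M 2 2 * M 0 3
      - M 3 0 * M 2 1 * M 0 2 * M 1 3 + M 3 0 * M 2 1 * M 1 2 * M 0 3 := by
  simp only [det_apply, Units.smul_def, zsmul_eq_mul, Fin.prod_univ_four]
  rw [Equiv.Perm.sum_sign_mul_fin_four fun p q r s => M p 0 * M q 1 * M r 2 * M s 3]
  ring

theorem sum_sum_eps_mul (i : Fin 3) (F : Fin 3 → Fin 3 → ℝ) :
    ∑ k, ∑ l, eps i k l * F k l = F (i + 1) (i + 2) - F (i + 2) (i + 1) := by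
  fin_cases i <;> simp [Fin.sum_univ_three, eps] <;> ring

section Forms

variable {V : Type*}

def pfaffian (A : V → V → ℝ) (v1 v2 v3 v4 : V) : ℝ :=
  A v1 v2 * A v3 v4 - A v1 v3 * A v2 v4 + A v1 v4 * A v2 v3

def mixedTwoForm (T : Matrix (Fin 3) (Fin 3) ℝ) (a e : Fin 3 → V → ℝ) (u v : V) : ℝ :=
  ∑ i, ∑ j, T i j * (a i u * e j v - a i v * e j u)

theorem mixedTwoForm_antisymm (T : Matrix (Fin 3) (Fin 3) ℝ) (a e : Fin 3 → V → ℝ) (u v : V) :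
    mixedTwoForm T a e u v = -mixedTwoForm T a e v u := by
  simp only [mixedTwoForm, ← Finset.sum_neg_distrib, ← mul_neg, neg_sub]

theorem half_w22_self_eq_pfaffian {A : V → V → ℝ} (hA : ∀ u v, A u v = -A v u)
    (v1 v2 v3 v4 : V) : (1 / 2 : ℝ) * w22 A A v1 v2 v3 v4 = pfaffian A v1 v2 v3 v4 := by
  simp only [w22, mul_assoc, Equiv.Perm.sum_sign_mul_fin_four fun p q r s =>
    A (![v1, v2, v3, v4] p) (![v1, v2, v3, v4] q) * A (![v1, v2, v3, v4] r) (![v1, v2, v3, v4] s)]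
  simp only [Matrix.cons_val_zero, Matrix.cons_val_one, Matrix.cons_val_two,
    Matrix.cons_val_three, Matrix.head_cons, Matrix.tail_cons]
  rw [hA v2 v1, hA v3 v1, hA v4 v1, hA v3 v2, hA v4 v2, hA v4 v3, pfaffian]
  ring

theorem pfaffian_const_mul (c : ℝ) (A : V → V → ℝ) (v1 v2 v3 v4 : V) :
    pfaffian (fun u v => c * A u v) v1 v2 v3 v4 = c ^ 2 * pfaffian A v1 v2 v3 v4 := by
  simp only [pfaffian]
  ring

theorem w4_swap_left (α β γ δ : V → ℝ) (v1 v2 v3 v4 : V) :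
    w4 β α γ δ v1 v2 v3 v4 = -w4 α β γ δ v1 v2 v3 v4 := by
  simp only [w4, Matrix.det_fin_four, Matrix.of_apply, Matrix.cons_val', Matrix.cons_val_zero,
    Matrix.cons_val_one, Matrix.cons_val_two, Matrix.cons_val_three, Matrix.tail_cons,
    Matrix.empty_val', Matrix.cons_val_fin_one, Matrix.vecHead]
  ring

theorem w4_swap_right (α β γ δ : V → ℝ) (v1 v2 v3 v4 : V) :
    w4 α β δ γ v1 v2 v3 v4 = -w4 α β γ δ v1 v2 v3 v4 := by
  simp only [w4, Matrix.det_fin_four, Matrix.of_apply, Matrix.cons_val', Matrix.cons_val_zero,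
    Matrix.cons_val_one, Matrix.cons_val_two, Matrix.cons_val_three, Matrix.tail_cons,
    Matrix.empty_val', Matrix.cons_val_fin_one, Matrix.vecHead]
  ring

theorem quarter_sum_eps_mul_eps_mul_w4 (a e : Fin 3 → V → ℝ) (i j : Fin 3) (v1 v2 v3 v4 : V) :
    (1 / 4 : ℝ) * ∑ k, ∑ l, ∑ m, ∑ n,
        eps i k l * eps j m n * w4 (a k) (a l) (e m) (e n) v1 v2 v3 v4 =
      w4 (a (i + 1)) (a (i + 2)) (e (j + 1)) (e (j + 2)) v1 v2 v3 v4 := by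
  have inner : ∀ k l, ∑ m, ∑ n, eps j m n * w4 (a k) (a l) (e m) (e n) v1 v2 v3 v4 =
      2 * w4 (a k) (a l) (e (j + 1)) (e (j + 2)) v1 v2 v3 v4 := fun k l => by
    rw [sum_sum_eps_mul, w4_swap_right]
    ring
  calc (1 / 4 : ℝ) * ∑ k, ∑ l, ∑ m, ∑ n,
        eps i k l * eps j m n * w4 (a k) (a l) (e m) (e n) v1 v2 v3 v4
      = (1 / 4 : ℝ) * ∑ k, ∑ l,
          eps i k l * (2 * w4 (a k) (a l) (e (j + 1)) (e (j + 2)) v1 v2 v3 v4) := by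
        simp only [mul_assoc, ← Finset.mul_sum, inner]
    _ = w4 (a (i + 1)) (a (i + 2)) (e (j + 1)) (e (j + 2)) v1 v2 v3 v4 := by
        rw [sum_sum_eps_mul, w4_swap_left]
        ring

theorem pfaffian_mixedTwoForm (T : Matrix (Fin 3) (Fin 3) ℝ) (a e : Fin 3 → V → ℝ)
    (v1 v2 v3 v4 : V) :
    pfaffian (mixedTwoForm T a e) v1 v2 v3 v4 =
      -∑ i, ∑ j, T.adjugate j i * w4 (a (i + 1)) (a (i + 2)) (e (j + 1)) (e (j + 2)) v1 v2 v3 v4 := by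
  simp only [pfaffian, mixedTwoForm, Fin.sum_univ_three, Matrix.adjugate_fin_three, w4,
    Matrix.det_fin_four, Matrix.of_apply, Matrix.cons_val', Matrix.cons_val_zero,
    Matrix.cons_val_one, Matrix.cons_val_two, Matrix.cons_val_three, Matrix.tail_cons,
    Matrix.empty_val', Matrix.cons_val_fin_one, Matrix.vecHead, Fin.reduceAdd]
  ring

end Forms

theorem half_omega_squared_general
    (V : Type*) [AddCommGroup V] [Module ℝ V]
    (e a : Fin 3 → (V →ₗ[ℝ] ℝ))
    (S : Matrix (Fin 3) (Fin 3) ℝ) (hS : S.PosDef)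
    (ω : V → V → ℝ)
    (hω : ∀ u v, ω u v = (Real.sqrt S.det)⁻¹ *
      ∑ i, ∑ j, S.adjugate i j * (a i u * e j v - a i v * e j u)) :
    ∀ v1 v2 v3 v4 : V,
      (1 / 2 : ℝ) * w22 ω ω v1 v2 v3 v4 =
        -∑ i, ∑ j, S i j * ((1 / 4 : ℝ) * ∑ k, ∑ l, ∑ m, ∑ n,
          eps i k l * eps j m n * w4 (a k) (a l) (e m) (e n) v1 v2 v3 v4) := by
  intro v1 v2 v3 v4
  set c := (Real.sqrt S.det)⁻¹
  have hω' : ω = fun u v => c * mixedTwoForm S.adjugate (fun i => a i) (fun j => e j) u v :=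
    funext₂ hω
  have hanti : ∀ u v, ω u v = -ω v u := fun u v => by
    simp only [hω', mixedTwoForm_antisymm _ _ _ u v, mul_neg]
  have hc : c ^ 2 * S.det = 1 := by
    rw [inv_pow, Real.sq_sqrt hS.det_pos.le, inv_mul_cancel₀ hS.det_pos.ne']
  have hadj : ∀ i j, S.adjugate.adjugate j i = S.det * S i j := fun i j => by
    rw [Matrix.adjugate_adjugate S (by simp), Matrix.smul_apply, smul_eq_mul, Fintype.card_fin,
      pow_one, ← hS.isHermitian.apply i j, star_trivial]
  rw [half_w22_self_eq_pfaffian hanti, hω', pfaffian_const_mul, pfaffian_mixedTwoForm]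
  simp only [quarter_sum_eps_mul_eps_mul_w4]
  simp only [hadj, mul_neg, Finset.mul_sum, ← mul_assoc, hc, one_mul]

theorem half_omega_squared
    (V : Type*) [AddCommGroup V] [Module ℝ V] (hdim : Module.finrank ℝ V = 6)
    (e a : Fin 3 → (V →ₗ[ℝ] ℝ))
    (hind : LinearIndependent ℝ (Sum.elim e a))
    (S : Matrix (Fin 3) (Fin 3) ℝ) (hS : S.PosDef)
    (ω : V → V → ℝ)
    (hω : ∀ u v, ω u v = (Real.sqrt S.det)⁻¹ *
      ∑ i, ∑ j, S.adjugate i j * (a i u * e j v - a i v * e j u)) :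
    ∀ v1 v2 v3 v4 : V,
      (1 / 2 : ℝ) * w22 ω ω v1 v2 v3 v4 =
        -∑ i, ∑ j, S i j * ((1 / 4 : ℝ) * ∑ k, ∑ l, ∑ m, ∑ n,
          eps i k l * eps j m n * w4 (a k) (a l) (e m) (e n) v1 v2 v3 v4) :=
  half_omega_squared_general V e a S hS ω hω
end
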